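/- If g : [0,1] → ℝ is strictly decreasing, nonnegative, T-times monotone, and g(1) = 0, then with g_1 = g and g_{k+1} = -g_k'·g, each g_k (k ≤ T) is strictly decreasing on [0,1] and satisfies g_k(X) > 0 for all X ∈ [0,1). -/

import Mathlib

/-!
Write `g_{k+1} = u_k · g` with `u_k = -g_k'`. Inductively `g_k` is `(T - k + 1)`-times monotone
(these classes are closed under products), so for `k < T` the function `u_k ≥ 0` is antitone.
If `g_k` is strictly decreasing, `u_k` cannot vanish at any `x < 1`: it would then vanish on
`[x, 1]` and `g_k` would be constant there. Hence `u_k > 0` on `[0, 1)`, and multiplying by the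
strictly decreasing `g ≥ 0` gives a strictly decreasing `g_{k+1}`, which vanishes at `1`.
-/

open Set

/-- Recursive form of `(-1)^j f^{(j)} ≥ 0` on `s` for all `j ≤ n`
(see `timesMonotoneOn_of_iteratedDeriv`). -/
def TimesMonotoneOn : ℕ → Set ℝ → (ℝ → ℝ) → Prop
  | 0, s, f => ∀ x ∈ s, 0 ≤ f x
  | n + 1, s, f => Differentiable ℝ f ∧ (∀ x ∈ s, 0 ≤ f x) ∧ TimesMonotoneOn n s (-deriv f)

namespace TimesMonotoneOn

variable {n m : ℕ} {s : Set ℝ} {f u v : ℝ → ℝ}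

theorem nonneg (hf : TimesMonotoneOn n s f) : ∀ x ∈ s, 0 ≤ f x := by
  cases n with
  | zero => exact hf
  | succ n => exact hf.2.1

theorem of_succ (hf : TimesMonotoneOn (n + 1) s f) : TimesMonotoneOn n s f := by
  induction n generalizing f with
  | zero => exact hf.2.1
  | succ n ih => exact ⟨hf.1, hf.2.1, ih hf.2.2⟩

theorem of_le (hmn : m ≤ n) (hf : TimesMonotoneOn n s f) : TimesMonotoneOn m s f := by
  induction n, hmn using Nat.le_induction with
  | base => exact hf
  | succ n _ ih => exact ih hf.of_succ

theorem add (hu : TimesMonotoneOn n s u) (hv : TimesMonotoneOn n s v) :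
    TimesMonotoneOn n s (u + v) := by
  induction n generalizing u v with
  | zero => exact fun x hx => add_nonneg (hu x hx) (hv x hx)
  | succ n ih =>
    refine ⟨hu.1.add hv.1, fun x hx => add_nonneg (hu.2.1 x hx) (hv.2.1 x hx), ?_⟩
    have hderiv : -deriv (u + v) = -deriv u + -deriv v := by
      ext x
      simp only [Pi.neg_apply, Pi.add_apply, deriv_add (hu.1 x) (hv.1 x), neg_add]
    rw [hderiv]
    exact ih hu.2.2 hv.2.2

theorem mul (hu : TimesMonotoneOn n s u) (hv : TimesMonotoneOn n s v) :
    TimesMonotoneOn n s (u * v) := by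
  induction n generalizing u v with
  | zero => exact fun x hx => mul_nonneg (hu x hx) (hv x hx)
  | succ n ih =>
    refine ⟨hu.1.mul hv.1, fun x hx => mul_nonneg (hu.2.1 x hx) (hv.2.1 x hx), ?_⟩
    have hderiv : -deriv (u * v) = -deriv u * v + u * -deriv v := by
      ext x
      simp only [Pi.neg_apply, Pi.add_apply, Pi.mul_apply, deriv_mul (hu.1 x) (hv.1 x)]
      ring
    rw [hderiv]
    exact (ih hu.2.2 hv.of_succ).add (ih hu.of_succ hv.2.2)

theorem antitoneOn (hs : Convex ℝ s) (hf : TimesMonotoneOn (n + 1) s f) : AntitoneOn f s :=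
  antitoneOn_of_deriv_nonpos hs hf.1.continuous.continuousOn hf.1.differentiableOn
    fun x hx => neg_nonneg.mp (hf.2.2.nonneg x (interior_subset hx))

end TimesMonotoneOn

theorem timesMonotoneOn_of_iteratedDeriv {s : Set ℝ} :
    ∀ (n : ℕ) (f : ℝ → ℝ), ContDiff ℝ n f →
      (∀ j ≤ n, ∀ x ∈ s, 0 ≤ (-1) ^ j * iteratedDeriv j f x) → TimesMonotoneOn n s f
  | 0, f, _, hsign => fun x hx => by simpa using hsign 0 le_rfl x hx
  | n + 1, f, hf, hsign => by
    rw [Nat.cast_add_one, contDiff_succ_iff_deriv] at hf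
    refine ⟨hf.1, fun x hx => by simpa using hsign 0 (Nat.zero_le _) x hx, ?_⟩
    refine timesMonotoneOn_of_iteratedDeriv n _ hf.2.2.neg fun j hj x hx => ?_
    rw [iteratedDeriv_neg, ← iteratedDeriv_succ']
    have := hsign (j + 1) (by omega) x hx
    rw [pow_succ] at this
    linarith

theorem deriv_neg_of_strictAntiOn_of_monotoneOn {f : ℝ → ℝ} {a b x : ℝ}
    (hf : Differentiable ℝ f) (hanti : StrictAntiOn f (Icc a b))
    (hmono : MonotoneOn (deriv f) (Icc a b)) (hx : x ∈ Ico a b) : deriv f x < 0 := by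
  by_contra! hx_nonneg
  have hsub : Icc x b ⊆ Icc a b := Icc_subset_Icc_left hx.1
  have hf_mono : MonotoneOn f (Icc x b) :=
    monotoneOn_of_deriv_nonneg (convex_Icc x b) hf.continuous.continuousOn hf.differentiableOn
      fun y hy => by
        rw [interior_Icc] at hy
        exact hx_nonneg.trans (hmono (hsub (left_mem_Icc.2 hx.2.le))
          (hsub (Ioo_subset_Icc_self hy)) hy.1.le)
  have hle := hf_mono (left_mem_Icc.2 hx.2.le) (right_mem_Icc.2 hx.2.le) hx.2.le
  have hlt := hanti (hsub (left_mem_Icc.2 hx.2.le)) (hsub (right_mem_Icc.2 hx.2.le)) hx.2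
  exact hle.not_gt hlt

theorem AntitoneOn.mul_strictAntiOn {u v : ℝ → ℝ} {a b : ℝ} (hu : AntitoneOn u (Icc a b))
    (hu_pos : ∀ x ∈ Ico a b, 0 < u x) (hv : StrictAntiOn v (Icc a b))
    (hv_nonneg : ∀ x ∈ Icc a b, 0 ≤ v x) : StrictAntiOn (u * v) (Icc a b) := by
  intro x hx y hy hxy
  calc u y * v y ≤ u x * v y := mul_le_mul_of_nonneg_right (hu hx hy hxy.le) (hv_nonneg y hy)
    _ < u x * v x := mul_lt_mul_of_pos_left (hv hx hy hxy) (hu_pos x ⟨hx.1, hxy.trans_le hy.2⟩)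

theorem strictAntiOn_neg_deriv_mul {f v : ℝ → ℝ} {a b : ℝ}
    (hf : TimesMonotoneOn 2 (Icc a b) f) (hf_anti : StrictAntiOn f (Icc a b))
    (hv : StrictAntiOn v (Icc a b)) (hv_nonneg : ∀ x ∈ Icc a b, 0 ≤ v x) :
    StrictAntiOn (-deriv f * v) (Icc a b) := by
  have hu : AntitoneOn (-deriv f) (Icc a b) := hf.2.2.antitoneOn (convex_Icc a b)
  have hderiv_mono : MonotoneOn (deriv f) (Icc a b) := fun x hx y hy hxy =>
    neg_le_neg_iff.mp (hu hx hy hxy)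
  exact hu.mul_strictAntiOn
    (fun x hx => neg_pos.mpr (deriv_neg_of_strictAntiOn_of_monotoneOn hf.1 hf_anti hderiv_mono hx))
    hv hv_nonneg

theorem stmt_16_general (T : ℕ) (g : ℝ → ℝ) (hg : ContDiff ℝ ((T : ℕ) : ℕ∞) g)
    (hanti : StrictAntiOn g (Set.Icc (0:ℝ) 1))
    (hg1 : g 1 = 0)
    (hmon : ∀ k ≤ T, ∀ X ∈ Set.Icc (0:ℝ) 1, 0 ≤ (-1)^k * iteratedDeriv k g X)
    (gk : ℕ → ℝ → ℝ) (hgk1 : ∀ X : ℝ, gk 1 X = g X)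
    (hrec : ∀ k, 1 ≤ k → ∀ X : ℝ, gk (k+1) X = -deriv (gk k) X * g X)
    (k : ℕ) (hk1 : 1 ≤ k) (hkT : k ≤ T) :
    StrictAntiOn (gk k) (Set.Icc (0:ℝ) 1) ∧
    ∀ X ∈ Set.Ico (0:ℝ) 1, 0 < gk k X := by
  have hG : TimesMonotoneOn T (Icc 0 1) g := timesMonotoneOn_of_iteratedDeriv T g hg hmon
  have key : ∀ k, 1 ≤ k → k ≤ T →
      TimesMonotoneOn (T - k + 1) (Icc 0 1) (gk k) ∧ StrictAntiOn (gk k) (Icc 0 1) := by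
    intro k hk
    induction k, hk using Nat.le_induction with
    | base =>
      intro hT
      rw [funext hgk1, show T - 1 + 1 = T by omega]
      exact ⟨hG, hanti⟩
    | succ k hk ih =>
      intro hkT
      obtain ⟨hP, hA⟩ := ih (by omega)
      rw [funext (hrec k hk)]
      obtain ⟨n, hn⟩ : ∃ n, T - k + 1 = n + 2 := ⟨T - k - 1, by omega⟩
      rw [hn] at hP
      rw [show T - (k + 1) + 1 = n + 1 by omega]
      exact ⟨hP.2.2.mul (hG.of_le (by omega)),
        strictAntiOn_neg_deriv_mul (hP.of_le (by omega)) hA hanti hG.nonneg⟩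
  have hk_one : gk k 1 = 0 := by
    obtain ⟨m, rfl⟩ := Nat.exists_eq_add_of_le' hk1
    cases m with
    | zero => rw [hgk1, hg1]
    | succ m => rw [hrec (m + 1) (by omega), hg1, mul_zero]
  obtain ⟨-, hk_anti⟩ := key k hk1 hkT
  refine ⟨hk_anti, fun X hX => ?_⟩
  simpa [hk_one] using hk_anti (Ico_subset_Icc_self hX) (right_mem_Icc.2 zero_le_one) hX.2

/-- If `g : [0,1] → ℝ` is strictly decreasing, nonnegative, `T`-times monotone,
with `g(1) = 0`, then with `g₁ = g` and `g_{k+1} = -g_k'·g`, each `g_k`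
(`1 ≤ k ≤ T`) is strictly decreasing on `[0,1]` and strictly positive on `[0,1)`. -/
theorem stmt_16 (T : ℕ) (g : ℝ → ℝ) (hg : ContDiff ℝ ((T : ℕ) : ℕ∞) g)
    (hanti : StrictAntiOn g (Set.Icc (0:ℝ) 1))
    (hpos : ∀ X ∈ Set.Icc (0:ℝ) 1, 0 ≤ g X)
    (hg1 : g 1 = 0)
    (hmon : ∀ k ≤ T, ∀ X ∈ Set.Icc (0:ℝ) 1, 0 ≤ (-1)^k * iteratedDeriv k g X)
    (gk : ℕ → ℝ → ℝ) (hgk1 : ∀ X : ℝ, gk 1 X = g X)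
    (hrec : ∀ k, 1 ≤ k → ∀ X : ℝ, gk (k+1) X = -deriv (gk k) X * g X)
    (k : ℕ) (hk1 : 1 ≤ k) (hkT : k ≤ T) :
    StrictAntiOn (gk k) (Set.Icc (0:ℝ) 1) ∧
    ∀ X ∈ Set.Ico (0:ℝ) 1, 0 < gk k X :=
  stmt_16_general T g hg hanti hg1 hmon gk hgk1 hrec k hk1 hkT
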